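/- Let M ≥ 1, let D, L ∈ ℂ^{M×M} with D diagonal and L strictly lower-triangular, and suppose R = D + L + Lᴴ is positive definite Hermitian. Let λ ∈ ℂ and v ∈ ℂ^M with v ≠ 0 satisfy Lᴴ·v = λ·(D + L)·v (i.e., v is an eigenvector of the Gauss–Seidel iteration matrix (D+L)⁻¹·Lᴴ with eigenvalue λ). Set β = vᴴ·D·v (a positive real number), and write a = Re(vᴴ·L·v), b = Im(vᴴ·L·v). Then β + vᴴ·L·v ≠ 0, λ = (a − i·b)/(β + a + i·b), and |λ|² = (a² + b²)/((β + a)² + b²). -/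

import Mathlib

open Matrix
open scoped ComplexOrder

/-!
With `c = vᴴ L v` and `β = vᴴ D v`, pairing the eigenvalue equation with `v` gives
`conj c = λ (β + c)`. Positive definiteness of `R` gives `β + 2 Re c > 0`, and that of its
diagonal `D` gives `β > 0`; hence `Re (β + c) > 0` and `λ = conj c / (β + c)`.
-/

namespace Matrix

variable {n : Type*}

theorem star_dotProduct_conjTranspose_mulVec [Fintype n] {α : Type*} [CommSemiring α]
    [StarRing α] (A : Matrix n n α) (v : n → α) :
    star v ⬝ᵥ (Aᴴ *ᵥ v) = star (star v ⬝ᵥ (A *ᵥ v)) := by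
  rw [dotProduct_mulVec, ← star_mulVec, star_dotProduct, dotProduct_comm]

theorem star_dotProduct_mulVec_eq_mul_of_conjTranspose_mulVec_eq [Fintype n] {α : Type*}
    [CommSemiring α] [StarRing α] {D L : Matrix n n α} {v : n → α} {lam : α}
    (h : Lᴴ *ᵥ v = lam • ((D + L) *ᵥ v)) :
    star (star v ⬝ᵥ (L *ᵥ v)) = lam * (star v ⬝ᵥ (D *ᵥ v) + star v ⬝ᵥ (L *ᵥ v)) := by
  rw [← star_dotProduct_conjTranspose_mulVec, h, dotProduct_smul, add_mulVec, dotProduct_add,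
    smul_eq_mul]

theorem PosDef.of_isDiag_of_diag_eq {R : Type*} [Ring R] [PartialOrder R] [StarRing R]
    [StarOrderedRing R] [NoZeroDivisors R] [Nontrivial R] [DecidableEq n]
    {A D : Matrix n n R} (hA : A.PosDef) (hD : D.IsDiag) (h : ∀ i, D i i = A i i) :
    D.PosDef := by
  rw [← hD.diagonal_diag]
  exact posDef_diagonal_iff.mpr fun i => (h i).trans_gt hA.diag_pos

theorem PosDef.re_add_two_mul_re_pos [Fintype n] {𝕜 : Type*} [RCLike 𝕜] {D L : Matrix n n 𝕜}
    (hR : (D + L + Lᴴ).PosDef) {v : n → 𝕜} (hv : v ≠ 0) :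
    0 < RCLike.re (star v ⬝ᵥ (D *ᵥ v)) + 2 * RCLike.re (star v ⬝ᵥ (L *ᵥ v)) := by
  have h := hR.re_dotProduct_pos hv
  rw [add_mulVec, add_mulVec, dotProduct_add, dotProduct_add,
    star_dotProduct_conjTranspose_mulVec] at h
  simpa [RCLike.star_def, two_mul, add_assoc] using h

end Matrix

theorem gauss_seidel_eigenvalue_formula_general
    (M : ℕ) (D L : Matrix (Fin M) (Fin M) ℂ)
    (hDdiag : D.IsDiag) (hLlow : ∀ i j : Fin M, i ≤ j → L i j = 0)
    (hR : (D + L + Lᴴ).PosDef)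
    (lam : ℂ) (v : Fin M → ℂ) (hv : v ≠ 0)
    (heig : Lᴴ *ᵥ v = lam • ((D + L) *ᵥ v))
    (β a b : ℝ)
    (hβ : β = (star v ⬝ᵥ (D *ᵥ v)).re)
    (ha : a = (star v ⬝ᵥ (L *ᵥ v)).re)
    (hb : b = (star v ⬝ᵥ (L *ᵥ v)).im) :
    star v ⬝ᵥ (D *ᵥ v) = (β : ℂ) ∧ 0 < β ∧
    (β : ℂ) + star v ⬝ᵥ (L *ᵥ v) ≠ 0 ∧
    lam = ((a : ℂ) - Complex.I * (b : ℂ)) / ((β : ℂ) + (a : ℂ) + Complex.I * (b : ℂ)) ∧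
    (‖lam‖) ^ 2 = (a ^ 2 + b ^ 2) / ((β + a) ^ 2 + b ^ 2) := by
  have hD : D.PosDef := hR.of_isDiag_of_diag_eq hDdiag fun i => by simp [hLlow i i le_rfl]
  obtain ⟨hβ0, hDv⟩ := Complex.pos_iff.mp (hD.dotProduct_mulVec_pos hv)
  rw [← hβ] at hβ0
  replace hDv : star v ⬝ᵥ (D *ᵥ v) = β := Complex.ext hβ.symm (by simpa using hDv.symm)
  have hLv : star v ⬝ᵥ (L *ᵥ v) = a + Complex.I * b := Complex.ext (by simp [ha]) (by simp [hb])
  have hβa : 0 < β + a := by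
    have := hR.re_add_two_mul_re_pos hv
    simp [hDv, hLv] at this
    linarith
  have hden : (β : ℂ) + a + Complex.I * b ≠ 0 := fun h =>
    hβa.ne' (by simpa using congrArg Complex.re h)
  have hlam : lam = (a - Complex.I * b) / (β + a + Complex.I * b) := by
    have := star_dotProduct_mulVec_eq_mul_of_conjTranspose_mulVec_eq heig
    rw [hDv, hLv] at this
    rw [eq_div_iff hden]
    simpa [Complex.star_def, add_assoc, sub_eq_add_neg, mul_comm] using this.symm
  refine ⟨hDv, hβ0, by rwa [hLv, ← add_assoc], hlam, ?_⟩
  rw [hlam, norm_div, div_pow, Complex.sq_norm, Complex.sq_norm]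
  congr 1 <;> simp [Complex.normSq_apply] <;> ring

/-- Formula for an eigenvalue of the Gauss–Seidel iteration matrix of a
positive definite Hermitian matrix `R = D + L + Lᴴ`. -/
theorem gauss_seidel_eigenvalue_formula
    (M : ℕ) (hM : 1 ≤ M) (D L : Matrix (Fin M) (Fin M) ℂ)
    (hDdiag : D.IsDiag) (hLlow : ∀ i j : Fin M, i ≤ j → L i j = 0)
    (hR : (D + L + Lᴴ).PosDef)
    (lam : ℂ) (v : Fin M → ℂ) (hv : v ≠ 0)
    (heig : Lᴴ *ᵥ v = lam • ((D + L) *ᵥ v))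
    (β a b : ℝ)
    (hβ : β = (star v ⬝ᵥ (D *ᵥ v)).re)
    (ha : a = (star v ⬝ᵥ (L *ᵥ v)).re)
    (hb : b = (star v ⬝ᵥ (L *ᵥ v)).im) :
    star v ⬝ᵥ (D *ᵥ v) = (β : ℂ) ∧ 0 < β ∧
    (β : ℂ) + star v ⬝ᵥ (L *ᵥ v) ≠ 0 ∧
    lam = ((a : ℂ) - Complex.I * (b : ℂ)) / ((β : ℂ) + (a : ℂ) + Complex.I * (b : ℂ)) ∧
    (‖lam‖) ^ 2 = (a ^ 2 + b ^ 2) / ((β + a) ^ 2 + b ^ 2) :=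
  gauss_seidel_eigenvalue_formula_general M D L hDdiag hLlow hR lam v hv heig β a b hβ ha hb
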